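/- With notation as in the piecewise-constant efficiency model, if for some j ∈ {1,…,m} the switching time p_j is replaced by p_j' with p_{j-1} < p_j < p_j' < p_{j+1}, then ρ(Φ(E, P̃_j)) < ρ(Φ(E,P)), i.e., lengthening the interval on which the higher efficiency e_j acts strictly decreases the spectral radius. -/

import Mathlib

open Matrix

/-- The matrix exponential over the reals. -/
noncomputable def mexp {n : ℕ} (A : Matrix (Fin n) (Fin n) ℝ) : Matrix (Fin n) (Fin n) ℝ :=
  NormedSpace.exp A

/-- Spectral radius of a real matrix: largest modulus of its (complex) eigenvalues. -/
noncomputable def specRad {n : ℕ} (A : Matrix (Fin n) (Fin n) ℝ) : ENNReal :=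
  spectralRadius ℂ (A.map (Complex.ofReal))

/-- The matrix `A(e)` of the within-host HIV model with RT-inhibitor efficiency `e`. -/
noncomputable def Amat (β γ k T₀ N : ℝ) (e : ℝ) : Matrix (Fin 2) (Fin 2) ℝ :=
  !![-β, k * (1 - e) * T₀; N * β, -γ]

/-- The monodromy matrix `Φ(e,p)` for bang-bang periodic treatment. -/
noncomputable def Phi (β γ k T₀ N τ : ℝ) (e p : ℝ) : Matrix (Fin 2) (Fin 2) ℝ :=
  mexp ((τ - p) • Amat β γ k T₀ N 0) * mexp (p • Amat β γ k T₀ N e)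

/-- The monodromy matrix for a general piecewise-constant periodic efficiency:
`Φ(E,P) = e^{(p_{m+1}-p_m)A(e_{m+1})} ⋯ e^{(p₁-p₀)A(e₁)}`, where the efficiency takes the
value `e i` on the interval `[p i.castSucc, p i.succ)`. -/
noncomputable def PhiPC (β γ k T₀ N : ℝ) (m : ℕ) (e : Fin (m + 1) → ℝ)
    (p : Fin (m + 2) → ℝ) : Matrix (Fin 2) (Fin 2) ℝ :=
  (((List.finRange (m + 1)).map fun i =>
      mexp ((p i.succ - p i.castSucc) • Amat β γ k T₀ N (e i))).reverse).prod

/-!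
Moving `p_j` to `p_j' = p_j + δ` only affects the two factors adjacent to `p_j`; splitting them
at `p_j'` gives `Φ(E,P) = R X e^{δA(e_{j+1})} Y L` and `Φ(E,P̃_j) = R X e^{δA(e_j)} Y L`.
For `t ≥ 0` and `e ≤ 1` the matrix `tA(e)` is Metzler, so its exponential is nonnegative with
positive diagonal. Shifting by a multiple of the identity reduces to nonnegative matrices, whose
exponential series is entrywise monotone, so `A(e_j) ≤ A(e_{j+1})` with a strict `(0,1)` entry
passes to the exponentials. As the first column of `R X` and the second row of `Y L` are positive,
`Φ(E,P̃_j) < Φ(E,P)` in every entry, and the spectral radius of a nonnegative `2 × 2` matrix, its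
explicit Perron root, is strictly increasing in the entries.
-/

namespace Matrix

def IsMetzler {n : Type*} (A : Matrix n n ℝ) : Prop := ∀ i j, i ≠ j → 0 ≤ A i j

variable {n : Type*} [Fintype n]

theorem mul_apply_nonneg {A B : Matrix n n ℝ} (hA : ∀ i j, 0 ≤ A i j) (hB : ∀ i j, 0 ≤ B i j)
    (i j : n) : 0 ≤ (A * B) i j :=
  Finset.sum_nonneg fun k _ => mul_nonneg (hA i k) (hB k j)

theorem mul_apply_le_mul_apply {A B : Matrix n n ℝ} (hA : ∀ i j, 0 ≤ A i j)
    (hB : ∀ i j, 0 ≤ B i j) (i k j : n) : A i k * B k j ≤ (A * B) i j :=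
  Finset.single_le_sum (f := fun l => A i l * B l j) (fun l _ => mul_nonneg (hA i l) (hB l j))
    (Finset.mem_univ k)

theorem mul_mul_apply_lt_mul_mul_apply {C M M' D : Matrix n n ℝ} (hC : ∀ i j, 0 ≤ C i j)
    (hD : ∀ i j, 0 ≤ D i j) (hM : ∀ i j, M i j ≤ M' i j) {a k l b : n} (hCa : 0 < C a k)
    (hMkl : M k l < M' k l) (hDb : 0 < D l b) : (C * M * D) a b < (C * M' * D) a b := by
  have hdiff : ∀ i j, 0 ≤ (M' - M) i j := fun i j => sub_nonneg.2 (hM i j)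
  have hpos : 0 < (C * (M' - M) * D) a b := calc
    0 < C a k * (M' - M) k l * D l b := by
        have := sub_pos.2 hMkl
        simp only [sub_apply]
        positivity
    _ ≤ (C * (M' - M)) a l * D l b :=
        mul_le_mul_of_nonneg_right (mul_apply_le_mul_apply hC hdiff a k l) hDb.le
    _ ≤ _ := mul_apply_le_mul_apply (mul_apply_nonneg hC hdiff) hD a l b
  have hsplit : C * M' * D = C * M * D + C * (M' - M) * D := by noncomm_ring
  rw [hsplit, add_apply]
  linarith

variable [DecidableEq n]

def nonnegPosDiag : Submonoid (Matrix n n ℝ) where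
  carrier := {M | (∀ i j, 0 ≤ M i j) ∧ ∀ i, 0 < M i i}
  mul_mem' {M N} hM hN := ⟨mul_apply_nonneg hM.1 hN.1, fun i =>
    (mul_pos (hM.2 i) (hN.2 i)).trans_le (mul_apply_le_mul_apply hM.1 hN.1 i i i)⟩
  one_mem' := ⟨zero_le_one_elem, fun i => by simp⟩

theorem mul_apply_pos_of_mem_nonnegPosDiag_left {R X : Matrix n n ℝ} (hR : R ∈ nonnegPosDiag)
    (hX : ∀ i j, 0 ≤ X i j) {i j : n} (hij : 0 < X i j) : 0 < (R * X) i j :=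
  (mul_pos (hR.2 i) hij).trans_le (mul_apply_le_mul_apply hR.1 hX i i j)

theorem mul_apply_pos_of_mem_nonnegPosDiag_right {Y L : Matrix n n ℝ} (hL : L ∈ nonnegPosDiag)
    (hY : ∀ i j, 0 ≤ Y i j) {i j : n} (hij : 0 < Y i j) : 0 < (Y * L) i j :=
  (mul_pos hij (hL.2 j)).trans_le (mul_apply_le_mul_apply hY hL.1 i j j)

theorem pow_apply_le_pow_apply {A B : Matrix n n ℝ} (hA : ∀ i j, 0 ≤ A i j)
    (hAB : ∀ i j, A i j ≤ B i j) (k : ℕ) (i j : n) : (A ^ k) i j ≤ (B ^ k) i j := by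
  induction k generalizing i j with
  | zero => exact le_rfl
  | succ k ih =>
    have hB : ∀ i j, 0 ≤ B i j := fun i j => (hA i j).trans (hAB i j)
    rw [pow_succ, pow_succ, mul_apply, mul_apply]
    exact Finset.sum_le_sum fun l _ =>
      mul_le_mul (ih i l) (hAB l j) (hA l j) (pow_apply_nonneg hB k i l)

theorem hasSum_exp_apply (A : Matrix n n ℝ) (i j : n) :
    HasSum (fun k : ℕ => (k.factorial : ℝ)⁻¹ * (A ^ k) i j) (NormedSpace.exp A i j) := by
  -- `exp` only depends on the topology, which every matrix norm induces.
  let : NormedRing (Matrix n n ℝ) := Matrix.linftyOpNormedRing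
  let : NormedAlgebra ℝ (Matrix n n ℝ) := Matrix.linftyOpNormedAlgebra
  exact Pi.hasSum.1 (Pi.hasSum.1 (NormedSpace.exp_series_hasSum_exp' (𝕂 := ℝ) A) i) j

theorem exp_apply_le_exp_apply {A B : Matrix n n ℝ} (hA : ∀ i j, 0 ≤ A i j)
    (hAB : ∀ i j, A i j ≤ B i j) (i j : n) : NormedSpace.exp A i j ≤ NormedSpace.exp B i j :=
  hasSum_le (fun k => by gcongr; exact pow_apply_le_pow_apply hA hAB k i j)
    (hasSum_exp_apply A i j) (hasSum_exp_apply B i j)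

theorem exp_apply_lt_exp_apply {A B : Matrix n n ℝ} (hA : ∀ i j, 0 ≤ A i j)
    (hAB : ∀ i j, A i j ≤ B i j) {i j : n} (hij : A i j < B i j) :
    NormedSpace.exp A i j < NormedSpace.exp B i j :=
  hasSum_lt (i := 1) (fun k => by gcongr; exact pow_apply_le_pow_apply hA hAB k i j)
    (by simpa using hij) (hasSum_exp_apply A i j) (hasSum_exp_apply B i j)

theorem one_add_apply_le_exp_apply {A : Matrix n n ℝ} (hA : ∀ i j, 0 ≤ A i j) (i j : n) :
    (1 + A) i j ≤ NormedSpace.exp A i j := by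
  simpa using sum_le_hasSum {0, 1}
    (fun k _ => mul_nonneg (by positivity) (pow_apply_nonneg hA k i j)) (hasSum_exp_apply A i j)

theorem exp_smul_one (c : ℝ) : NormedSpace.exp (c • (1 : Matrix n n ℝ)) = Real.exp c • 1 := by
  rw [smul_one_eq_diagonal, exp_diagonal, Pi.exp_def, Real.exp_eq_exp_ℝ, ← smul_one_eq_diagonal]

theorem exp_eq_exp_neg_smul_exp_add_smul_one (A : Matrix n n ℝ) (c : ℝ) :
    NormedSpace.exp A = Real.exp (-c) • NormedSpace.exp (A + c • 1) := by
  rw [exp_add_of_commute _ _ ((Commute.one_right A).smul_right c), exp_smul_one, mul_smul_comm,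
    mul_one, smul_smul, ← Real.exp_add, neg_add_cancel, Real.exp_zero, one_smul]

namespace IsMetzler

variable {A B : Matrix n n ℝ}

theorem exists_nonneg_add_smul_one (hA : A.IsMetzler) : ∃ c : ℝ, ∀ i j, 0 ≤ (A + c • 1) i j := by
  refine ⟨∑ l, |A l l|, fun i j => ?_⟩
  rcases eq_or_ne i j with rfl | hij
  · have := Finset.single_le_sum (fun l _ => abs_nonneg (A l l)) (Finset.mem_univ i)
    simp only [add_apply, smul_apply, one_apply_eq, smul_eq_mul, mul_one]
    linarith [neg_abs_le (A i i)]
  · simpa [one_apply_ne hij] using hA i j hij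

theorem exp_apply_pos (hA : A.IsMetzler) {i j : n} (hij : i = j ∨ 0 < A i j) :
    0 < NormedSpace.exp A i j := by
  obtain ⟨c, hc⟩ := hA.exists_nonneg_add_smul_one
  rw [exp_eq_exp_neg_smul_exp_add_smul_one A c, smul_apply, smul_eq_mul]
  refine mul_pos (Real.exp_pos _) (lt_of_lt_of_le ?_ (one_add_apply_le_exp_apply hc i j))
  rcases eq_or_ne i j with rfl | hne
  · simpa using (hc i i).trans_lt (lt_one_add _)
  · simpa [one_apply_ne hne] using hij.resolve_left hne

theorem exp_apply_nonneg (hA : A.IsMetzler) (i j : n) : 0 ≤ NormedSpace.exp A i j := by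
  obtain ⟨c, hc⟩ := hA.exists_nonneg_add_smul_one
  rw [exp_eq_exp_neg_smul_exp_add_smul_one A c, smul_apply, smul_eq_mul]
  exact mul_nonneg (Real.exp_nonneg _)
    ((add_nonneg (zero_le_one_elem i j) (hc i j)).trans (one_add_apply_le_exp_apply hc i j))

theorem exp_mem_nonnegPosDiag (hA : A.IsMetzler) : NormedSpace.exp A ∈ nonnegPosDiag :=
  ⟨hA.exp_apply_nonneg, fun _ => hA.exp_apply_pos (Or.inl rfl)⟩

theorem exp_apply_le_exp_apply (hA : A.IsMetzler) (hAB : ∀ i j, A i j ≤ B i j) (i j : n) :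
    NormedSpace.exp A i j ≤ NormedSpace.exp B i j := by
  obtain ⟨c, hc⟩ := hA.exists_nonneg_add_smul_one
  rw [exp_eq_exp_neg_smul_exp_add_smul_one A c, exp_eq_exp_neg_smul_exp_add_smul_one B c]
  refine smul_le_smul_of_nonneg_left (Matrix.exp_apply_le_exp_apply hc (fun a b => ?_) i j)
    (Real.exp_nonneg _)
  simpa using hAB a b

theorem exp_apply_lt_exp_apply (hA : A.IsMetzler) (hAB : ∀ i j, A i j ≤ B i j) {i j : n}
    (hij : A i j < B i j) : NormedSpace.exp A i j < NormedSpace.exp B i j := by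
  obtain ⟨c, hc⟩ := hA.exists_nonneg_add_smul_one
  rw [exp_eq_exp_neg_smul_exp_add_smul_one A c, exp_eq_exp_neg_smul_exp_add_smul_one B c]
  refine smul_lt_smul_of_pos_left (Matrix.exp_apply_lt_exp_apply hc (fun a b => ?_) ?_)
    (Real.exp_pos _)
  · simpa using hAB a b
  · simpa using hij

end IsMetzler

section FinTwo

noncomputable def perronRoot (M : Matrix (Fin 2) (Fin 2) ℝ) : ℝ :=
  (M 0 0 + M 1 1 + √((M 0 0 - M 1 1) ^ 2 + 4 * (M 0 1 * M 1 0))) / 2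

variable {M N : Matrix (Fin 2) (Fin 2) ℝ}

theorem perronRoot_spec (hM : 0 ≤ M 0 1 * M 1 0) :
    M 0 0 ≤ perronRoot M ∧ M 1 1 ≤ perronRoot M ∧
      (perronRoot M - M 0 0) * (perronRoot M - M 1 1) = M 0 1 * M 1 0 := by
  have hs := Real.sq_sqrt (by positivity : 0 ≤ (M 0 0 - M 1 1) ^ 2 + 4 * (M 0 1 * M 1 0))
  have hs' : |M 0 0 - M 1 1| ≤ √((M 0 0 - M 1 1) ^ 2 + 4 * (M 0 1 * M 1 0)) :=
    Real.abs_le_sqrt (by linarith)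
  rw [abs_le] at hs'
  refine ⟨?_, ?_, ?_⟩ <;> unfold perronRoot
  · linarith
  · linarith
  · linear_combination hs / 4

theorem spectrum_map_ofReal_fin_two (hM : 0 ≤ M 0 1 * M 1 0) :
    spectrum ℂ (M.map Complex.ofReal) =
      {(perronRoot M : ℂ), ((M 0 0 + M 1 1 - perronRoot M : ℝ) : ℂ)} := by
  have hprod :
      perronRoot M * (M 0 0 + M 1 1 - perronRoot M) = M 0 0 * M 1 1 - M 0 1 * M 1 0 := by
    linear_combination -(perronRoot_spec hM).2.2
  have hprodC := congrArg ((↑) : ℝ → ℂ) hprod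
  push_cast at hprodC
  ext μ
  rw [mem_spectrum_iff_isRoot_charpoly, charpoly_fin_two, Polynomial.IsRoot.def]
  simp only [Polynomial.eval_add, Polynomial.eval_sub, Polynomial.eval_pow, Polynomial.eval_X,
    Polynomial.eval_mul, Polynomial.eval_C, trace_fin_two, det_fin_two, map_apply,
    Set.mem_insert_iff, Set.mem_singleton_iff]
  push_cast
  rw [← sub_eq_zero (a := μ), ← sub_eq_zero (a := μ), ← mul_eq_zero]
  constructor
  · intro h
    linear_combination h + hprodC
  · intro h
    linear_combination h - hprodC

theorem specRad_eq_perronRoot (hM : ∀ i j, 0 ≤ M i j) :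
    specRad M = ENNReal.ofReal (perronRoot M) := by
  obtain ⟨h0, h1, -⟩ := perronRoot_spec (mul_nonneg (hM 0 1) (hM 1 0))
  have hr : |perronRoot M| = perronRoot M := abs_of_nonneg ((hM 0 0).trans h0)
  have habs : |M 0 0 + M 1 1 - perronRoot M| ≤ |perronRoot M| := by
    rw [hr, abs_le]
    constructor <;> linarith [hM 0 0, hM 1 1]
  rw [specRad, spectralRadius, spectrum_map_ofReal_fin_two (mul_nonneg (hM 0 1) (hM 1 0)),
    iSup_pair]
  simp only [← enorm_eq_nnnorm, ← ofReal_norm, Complex.norm_real, Real.norm_eq_abs]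
  rw [sup_eq_left.2 (ENNReal.ofReal_le_ofReal habs), hr]

theorem perronRoot_lt_perronRoot (hM : ∀ i j, 0 ≤ M i j) (hMN : ∀ i j, M i j < N i j) :
    perronRoot M < perronRoot N := by
  have hN : ∀ i j, 0 ≤ N i j := fun i j => (hM i j).trans (hMN i j).le
  obtain ⟨hM0, hM1, hMr⟩ := perronRoot_spec (mul_nonneg (hM 0 1) (hM 1 0))
  obtain ⟨hN0, hN1, hNr⟩ := perronRoot_spec (mul_nonneg (hN 0 1) (hN 1 0))
  have hoff : M 0 1 * M 1 0 < N 0 1 * N 1 0 :=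
    mul_lt_mul'' (hMN 0 1) (hMN 1 0) (hM 0 1) (hM 1 0)
  by_contra! hle
  nlinarith [hMN 0 0, hMN 1 1, mul_le_mul (sub_le_sub_right hle (N 0 0))
    (sub_le_sub_right hle (N 1 1)) (sub_nonneg.2 hN1) (by linarith : 0 ≤ perronRoot M - N 0 0)]

end FinTwo

end Matrix

theorem specRad_lt_specRad_of_apply_lt {M N : Matrix (Fin 2) (Fin 2) ℝ} (hM : ∀ i j, 0 ≤ M i j)
    (hMN : ∀ i j, M i j < N i j) : specRad M < specRad N := by
  have hN : ∀ i j, 0 ≤ N i j := fun i j => (hM i j).trans (hMN i j).le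
  have hN0 := (Matrix.perronRoot_spec (mul_nonneg (hN 0 1) (hN 1 0))).1
  rw [Matrix.specRad_eq_perronRoot hM, Matrix.specRad_eq_perronRoot hN,
    ENNReal.ofReal_lt_ofReal_iff ((hM 0 0).trans_lt ((hMN 0 0).trans_le hN0))]
  exact Matrix.perronRoot_lt_perronRoot hM hMN

theorem specRad_mul_mul_lt_specRad_mul_mul {C M M' D : Matrix (Fin 2) (Fin 2) ℝ}
    (hC : ∀ i j, 0 ≤ C i j) (hM : ∀ i j, 0 ≤ M i j) (hD : ∀ i j, 0 ≤ D i j)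
    (hMM' : ∀ i j, M i j ≤ M' i j) {k l : Fin 2} (hCk : ∀ a, 0 < C a k) (hkl : M k l < M' k l)
    (hDl : ∀ b, 0 < D l b) : specRad (C * M * D) < specRad (C * M' * D) :=
  specRad_lt_specRad_of_apply_lt (Matrix.mul_apply_nonneg (Matrix.mul_apply_nonneg hC hM) hD)
    fun a b => Matrix.mul_mul_apply_lt_mul_mul_apply hC hD hMM' (hCk a) hkl (hDl b)

theorem List.exists_finRange_eq_append_cons_cons {n : ℕ} (i : Fin n) :
    ∃ T D, List.finRange (n + 1) = T ++ i.castSucc :: i.succ :: D := by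
  refine ⟨(List.finRange (n + 1)).take i, (List.finRange (n + 1)).drop (i + 2), ?_⟩
  conv_lhs => rw [← List.take_append_drop i (List.finRange (n + 1))]
  rw [List.drop_eq_getElem_cons (by simp), List.drop_eq_getElem_cons (by simp)]
  simp [Fin.ext_iff]

theorem exists_prod_reverse_map_finRange_eq {M : Type*} [Monoid M] (S : Submonoid M) {n : ℕ}
    (i : Fin n) {f g : Fin (n + 1) → M} (hfg : ∀ x, x ≠ i.castSucc → x ≠ i.succ → g x = f x)
    (hS : ∀ x, x ≠ i.castSucc → x ≠ i.succ → f x ∈ S) :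
    ∃ R ∈ S, ∃ L ∈ S,
      ((List.finRange (n + 1)).map f).reverse.prod = R * (f i.succ * f i.castSucc) * L ∧
      ((List.finRange (n + 1)).map g).reverse.prod = R * (g i.succ * g i.castSucc) * L := by
  obtain ⟨T, D, hTD⟩ := List.exists_finRange_eq_append_cons_cons i
  have hnd := List.nodup_finRange (n + 1)
  rw [hTD] at hnd
  have hout : ∀ x ∈ T ++ D, x ≠ i.castSucc ∧ x ≠ i.succ := by
    simp only [List.nodup_append, List.nodup_cons, List.mem_cons] at hnd
    grind
  have hcomm : ∀ l ⊆ T ++ D, l.map g = l.map f ∧ (l.map f).reverse.prod ∈ S := fun l hl =>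
    ⟨List.map_congr_left fun x hx => hfg x (hout x (hl hx)).1 (hout x (hl hx)).2,
      S.list_prod_mem fun y hy => by
        obtain ⟨x, hx, rfl⟩ := List.mem_map.1 (List.mem_reverse.1 hy)
        exact hS x (hout x (hl hx)).1 (hout x (hl hx)).2⟩
  obtain ⟨hDg, hDS⟩ := hcomm D (List.subset_append_right T D)
  obtain ⟨hTg, hTS⟩ := hcomm T (List.subset_append_left T D)
  refine ⟨_, hDS, _, hTS, ?_, ?_⟩ <;> simp [hTD, hDg, hTg, mul_assoc]

theorem mexp_add_smul {n : ℕ} (A : Matrix (Fin n) (Fin n) ℝ) (s t : ℝ) :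
    mexp ((s + t) • A) = mexp (s • A) * mexp (t • A) := by
  rw [mexp, add_smul]
  exact exp_add_of_commute _ _ (((Commute.refl A).smul_left s).smul_right t)

section Amat

variable {β γ k T₀ N t e e' : ℝ}

theorem isMetzler_smul_Amat (hβ : 0 ≤ β) (hk : 0 ≤ k) (hT₀ : 0 ≤ T₀) (hN : 0 ≤ N) (ht : 0 ≤ t)
    (he : e ≤ 1) : (t • Amat β γ k T₀ N e).IsMetzler := by
  intro i j hij
  have : 0 ≤ 1 - e := sub_nonneg.2 he
  fin_cases i <;> fin_cases j <;> simp [Amat] at hij ⊢ <;> positivity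

theorem mexp_smul_Amat_mem_nonnegPosDiag (hβ : 0 ≤ β) (hk : 0 ≤ k) (hT₀ : 0 ≤ T₀) (hN : 0 ≤ N)
    (ht : 0 ≤ t) (he : e ≤ 1) : mexp (t • Amat β γ k T₀ N e) ∈ Matrix.nonnegPosDiag :=
  (isMetzler_smul_Amat hβ hk hT₀ hN ht he).exp_mem_nonnegPosDiag

theorem mexp_smul_Amat_apply_one_zero_pos (hβ : 0 < β) (hk : 0 ≤ k) (hT₀ : 0 ≤ T₀) (hN : 0 < N)
    (ht : 0 < t) (he : e ≤ 1) : 0 < mexp (t • Amat β γ k T₀ N e) 1 0 :=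
  (isMetzler_smul_Amat hβ.le hk hT₀ hN.le ht.le he).exp_apply_pos
    (Or.inr (by simp [Amat]; positivity))

theorem smul_Amat_apply_le (hk : 0 ≤ k) (hT₀ : 0 ≤ T₀) (ht : 0 ≤ t) (he : e' ≤ e) (i j : Fin 2) :
    (t • Amat β γ k T₀ N e) i j ≤ (t • Amat β γ k T₀ N e') i j := by
  fin_cases i <;> fin_cases j <;> simp [Amat]
  gcongr

theorem smul_Amat_apply_zero_one_lt (hk : 0 < k) (hT₀ : 0 < T₀) (ht : 0 < t) (he : e' < e) :
    (t • Amat β γ k T₀ N e) 0 1 < (t • Amat β γ k T₀ N e') 0 1 := by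
  simp [Amat]
  gcongr

end Amat

section PhiPC

variable {β γ k T₀ N : ℝ}

theorem specRad_mul_mexp_smul_Amat_lt (hβ : 0 < β) (hk : 0 < k) (hT₀ : 0 < T₀) (hN : 0 < N)
    {R L : Matrix (Fin 2) (Fin 2) ℝ} (hR : R ∈ Matrix.nonnegPosDiag)
    (hL : L ∈ Matrix.nonnegPosDiag) {s δ t e e' : ℝ} (hs : 0 < s) (hδ : 0 < δ) (ht : 0 < t)
    (he : e ≤ 1) (he' : e' < e) :
    specRad (R * mexp (s • Amat β γ k T₀ N e') * mexp (δ • Amat β γ k T₀ N e) *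
        (mexp (t • Amat β γ k T₀ N e) * L)) <
      specRad (R * mexp (s • Amat β γ k T₀ N e') * mexp (δ • Amat β γ k T₀ N e') *
        (mexp (t • Amat β γ k T₀ N e) * L)) := by
  set S : Submonoid (Matrix (Fin 2) (Fin 2) ℝ) := Matrix.nonnegPosDiag
  have hX : mexp (s • Amat β γ k T₀ N e') ∈ S :=
    mexp_smul_Amat_mem_nonnegPosDiag hβ.le hk.le hT₀.le hN.le hs.le (he'.le.trans he)
  have hE : mexp (δ • Amat β γ k T₀ N e) ∈ S :=
    mexp_smul_Amat_mem_nonnegPosDiag hβ.le hk.le hT₀.le hN.le hδ.le he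
  have hY : mexp (t • Amat β γ k T₀ N e) ∈ S :=
    mexp_smul_Amat_mem_nonnegPosDiag hβ.le hk.le hT₀.le hN.le ht.le he
  have hMetzler := isMetzler_smul_Amat (γ := γ) hβ.le hk.le hT₀.le hN.le hδ.le he
  have hle := smul_Amat_apply_le (β := β) (γ := γ) (N := N) hk.le hT₀.le hδ.le he'.le
  refine specRad_mul_mul_lt_specRad_mul_mul (S.mul_mem hR hX).1 hE.1 (S.mul_mem hY hL).1
    (hMetzler.exp_apply_le_exp_apply hle) (Fin.forall_fin_two.2 ⟨?_, ?_⟩)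
    (hMetzler.exp_apply_lt_exp_apply hle (smul_Amat_apply_zero_one_lt hk hT₀ hδ he'))
    (Fin.forall_fin_two.2 ⟨?_, ?_⟩)
  · exact Matrix.mul_apply_pos_of_mem_nonnegPosDiag_left hR hX.1 (hX.2 0)
  · exact Matrix.mul_apply_pos_of_mem_nonnegPosDiag_left hR hX.1
      (mexp_smul_Amat_apply_one_zero_pos hβ hk.le hT₀.le hN hs (he'.le.trans he))
  · exact Matrix.mul_apply_pos_of_mem_nonnegPosDiag_right hL hY.1
      (mexp_smul_Amat_apply_one_zero_pos hβ hk.le hT₀.le hN ht he)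
  · exact Matrix.mul_apply_pos_of_mem_nonnegPosDiag_right hL hY.1 (hY.2 1)

theorem PhiPC_update_eq (hβ : 0 ≤ β) (hk : 0 ≤ k) (hT₀ : 0 ≤ T₀) (hN : 0 ≤ N) {m : ℕ}
    {e : Fin (m + 1) → ℝ} {p : Fin (m + 2) → ℝ} (hp : Monotone p) (he : ∀ l, e l ≤ 1)
    (i : Fin m) (p' : ℝ) :
    ∃ R ∈ Matrix.nonnegPosDiag, ∃ L ∈ Matrix.nonnegPosDiag,
      PhiPC β γ k T₀ N m e p =
        R * mexp ((p i.succ.succ - p') • Amat β γ k T₀ N (e i.succ)) *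
          mexp ((p' - p i.succ.castSucc) • Amat β γ k T₀ N (e i.succ)) *
          (mexp ((p i.succ.castSucc - p i.castSucc.castSucc) • Amat β γ k T₀ N (e i.castSucc)) *
            L) ∧
      PhiPC β γ k T₀ N m e (Function.update p i.succ.castSucc p') =
        R * mexp ((p i.succ.succ - p') • Amat β γ k T₀ N (e i.succ)) *
          mexp ((p' - p i.succ.castSucc) • Amat β γ k T₀ N (e i.castSucc)) *
          (mexp ((p i.succ.castSucc - p i.castSucc.castSucc) • Amat β γ k T₀ N (e i.castSucc)) *
            L) := by
  have hupdate : ∀ x : Fin (m + 1), x ≠ i.castSucc → x ≠ i.succ →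
      Function.update p i.succ.castSucc p' x.succ = p x.succ ∧
        Function.update p i.succ.castSucc p' x.castSucc = p x.castSucc := fun x h₁ h₂ =>
    ⟨Function.update_of_ne (by rwa [← Fin.succ_castSucc, Ne, Fin.succ_inj]) _ _,
      Function.update_of_ne (by rwa [Ne, Fin.castSucc_inj]) _ _⟩
  obtain ⟨R, hR, L, hL, hP, hQ⟩ := exists_prod_reverse_map_finRange_eq Matrix.nonnegPosDiag i
    (f := fun x => mexp ((p x.succ - p x.castSucc) • Amat β γ k T₀ N (e x)))
    (g := fun x => mexp ((Function.update p i.succ.castSucc p' x.succ -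
      Function.update p i.succ.castSucc p' x.castSucc) • Amat β γ k T₀ N (e x)))
    (fun x h₁ h₂ => by simp only [hupdate x h₁ h₂])
    (fun x _ _ => mexp_smul_Amat_mem_nonnegPosDiag hβ hk hT₀ hN
      (sub_nonneg.2 (hp (Fin.castSucc_le_succ x))) (he x))
  refine ⟨R, hR, L, hL, ?_, ?_⟩
  · rw [PhiPC, hP, Fin.succ_castSucc, ← sub_add_sub_cancel (p i.succ.succ) p', mexp_add_smul]
    simp only [mul_assoc]
  · rw [PhiPC, hQ, Fin.succ_castSucc, Function.update_self,
      Function.update_of_ne (Fin.castSucc_lt_succ (i := i.succ)).ne',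
      Function.update_of_ne (Fin.castSucc_lt_castSucc_iff.2 (Fin.castSucc_lt_succ (i := i))).ne,
      ← sub_add_sub_cancel p' (p i.succ.castSucc), mexp_add_smul]
    simp only [mul_assoc]

end PhiPC

theorem specRad_PhiPC_anti_in_p_general (β γ k T₀ N : ℝ) (hβ : 0 < β) (hk : 0 < k)
    (hT₀ : 0 < T₀) (hN : 0 < N) (m : ℕ)
    (e : Fin (m + 1) → ℝ) (p : Fin (m + 2) → ℝ)
    (hpmono : StrictMono p)
    (he1 : e 0 ≤ 1) (heanti : StrictAnti e)
    (j : Fin (m + 2)) (hj0 : (j : ℕ) ≠ 0) (hjlast : (j : ℕ) ≠ m + 1)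
    (p' : ℝ) (hlt : p j < p')
    (hub : ∀ l : Fin (m + 2), (l : ℕ) = (j : ℕ) + 1 → p' < p l) :
    specRad (PhiPC β γ k T₀ N m e (Function.update p j p')) <
      specRad (PhiPC β γ k T₀ N m e p) := by
  obtain ⟨i, rfl⟩ : ∃ i : Fin m, i.succ.castSucc = j :=
    ⟨⟨j - 1, by omega⟩, Fin.ext (by simp; omega)⟩
  have he : ∀ l, e l ≤ 1 := fun l => (heanti.antitone (Fin.zero_le l)).trans he1
  obtain ⟨R, hR, L, hL, hP, hQ⟩ :=
    PhiPC_update_eq (γ := γ) hβ.le hk.le hT₀.le hN.le hpmono.monotone he i p'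
  rw [hP, hQ]
  exact specRad_mul_mexp_smul_Amat_lt hβ hk hT₀ hN hR hL (sub_pos.2 (hub _ (by simp)))
    (sub_pos.2 hlt) (sub_pos.2 (hpmono (Fin.castSucc_lt_castSucc_iff.2 Fin.castSucc_lt_succ)))
    (he _) (heanti Fin.castSucc_lt_succ)

/-- Lengthening the interval on which the higher efficiency `e_j` acts (replacing the switching
time `p_j` by a larger `p_j' < p_{j+1}`) strictly decreases the spectral radius of `Φ(E,P)`. -/
theorem specRad_PhiPC_anti_in_p (β γ k T₀ N τ : ℝ) (hβ : 0 < β) (hγ : 0 < γ) (hk : 0 < k)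
    (hT₀ : 0 < T₀) (hN : 0 < N) (hτ : 0 < τ) (m : ℕ) (hm : 1 ≤ m)
    (e : Fin (m + 1) → ℝ) (p : Fin (m + 2) → ℝ)
    (hp0 : p 0 = 0) (hpτ : p (Fin.last (m + 1)) = τ) (hpmono : StrictMono p)
    (he1 : e 0 ≤ 1) (heN : 0 ≤ e (Fin.last m)) (heanti : StrictAnti e)
    (j : Fin (m + 2)) (hj0 : (j : ℕ) ≠ 0) (hjlast : (j : ℕ) ≠ m + 1)
    (p' : ℝ) (hlt : p j < p')
    (hub : ∀ l : Fin (m + 2), (l : ℕ) = (j : ℕ) + 1 → p' < p l) :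
    specRad (PhiPC β γ k T₀ N m e (Function.update p j p')) <
      specRad (PhiPC β γ k T₀ N m e p) :=
  specRad_PhiPC_anti_in_p_general β γ k T₀ N hβ hk hT₀ hN m e p hpmono he1 heanti j hj0 hjlast p'
    hlt hub
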